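/- Let X_1,…,X_S be i.i.d. real-valued random variables with common law P, let p ∈ (0,1), and let X^{(1)} ≤ … ≤ X^{(S)} denote the order statistics. Suppose s ∈ {1,…,S} and δ ∈ (0,1) satisfy Σ_{j=s}^{S} C(S,j) (1−p)^{j} p^{S−j} ≤ δ. Then, with probability at least 1 − δ over the sample, the s-th order statistic is an upper bound for the (1−p)-quantile in the sense that P({ x : x ≤ X^{(s)} }) ≥ 1 − p. -/

import Mathlib

/-!
Let `t` be a `(1 - p)`-quantile of `P`, i.e. `P (-∞, t) ≤ 1 - p ≤ P (-∞, t]`. If `X^{(s)} < t`,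
at least `s` sample points fall in `(-∞, t)`; the number of such points is binomial with success
probability `q = P (-∞, t) ≤ 1 - p`, so this happens with probability equal to the binomial tail
at `q`. The tail is monotone in the success probability (count how many of `n` uniform points
fall below `q`), hence it is at most the tail at `1 - p`, which is `≤ δ` by assumption. On the
complementary event `t ≤ X^{(s)}`, so `P (-∞, X^{(s)}] ≥ P (-∞, t] ≥ 1 - p`.
-/

open MeasureTheory

/-- The `k`-th order statistic (1-indexed, `k ∈ {1,…,S}`) of the tuple `X`:
the `k`-th smallest value among `X 0, …, X (S-1)`, counted with multiplicity. -/
noncomputable def orderStat {S : ℕ} (X : Fin S → ℝ) (k : ℕ) : ℝ :=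
  if h : k - 1 < S then X (Tuple.sort X ⟨k - 1, h⟩) else 0

open Finset ProbabilityTheory

lemma exists_measureReal_Iio_le_le_measureReal_Iic (P : Measure ℝ) [IsProbabilityMeasure P]
    {c : ℝ} (hc0 : 0 < c) (hc1 : c < 1) :
    ∃ t, P.real (Set.Iio t) ≤ c ∧ c ≤ P.real (Set.Iic t) := by
  set F := cdf P
  obtain ⟨x₀, hx₀⟩ := ((tendsto_cdf_atBot P).eventually_lt_const hc0).exists
  have hne : {x | c ≤ F x}.Nonempty := ((tendsto_cdf_atTop P).eventually_const_le hc1).exists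
  have hbdd : BddBelow {x | c ≤ F x} :=
    ⟨x₀, fun y hy => le_of_not_gt fun hyx => (hy.trans (F.mono hyx.le)).not_gt hx₀⟩
  set t := sInf {x | c ≤ F x}
  refine ⟨t, ?_, ?_⟩
  · have hleftLim : 0 ≤ Function.leftLim F t :=
      (cdf_nonneg P _).trans (F.mono.le_leftLim (sub_one_lt t))
    rw [measureReal_def, ← measure_cdf P, F.measure_Iio (tendsto_cdf_atBot P), sub_zero,
      ENNReal.toReal_ofReal hleftLim, F.mono.leftLim_eq_sSup]
    refine csSup_le (Set.nonempty_Iio.image F) (Set.forall_mem_image.2 fun x hx => ?_)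
    exact le_of_not_ge fun hcx => (csInf_le hbdd hcx).not_gt hx
  · rw [← cdf_eq_real, ← F.iInf_Ioi_eq t]
    refine le_ciInf fun r => ?_
    obtain ⟨y, hy, hyr⟩ := (csInf_lt_iff hbdd hne).1 r.2
    exact hy.trans (F.mono hyr.le)

lemma le_card_filter_lt_of_orderStat_lt {S s : ℕ} (X : Fin S → ℝ) (hsS : s ≤ S) {t : ℝ}
    (h : orderStat X s < t) : s ≤ #{i | X i < t} := by
  obtain _ | k := s
  · exact Nat.zero_le _
  have hk : k < S := hsS
  simp only [orderStat, Nat.add_sub_cancel, dif_pos hk] at h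
  calc k + 1 = #((Iic (⟨k, hk⟩ : Fin S)).map (Tuple.sort X).toEmbedding) := by simp
    _ ≤ #{i | X i < t} := card_le_card fun i hi => by
      obtain ⟨j, hj, rfl⟩ := mem_map.1 hi
      exact (mem_filter_univ _).2 ((Tuple.monotone_sort X (mem_Iic.1 hj)).trans_lt h)

noncomputable def binomialTail (n k : ℕ) (q : ℝ) : ℝ :=
  ∑ j ∈ Icc k n, n.choose j * q ^ j * (1 - q) ^ (n - j)

section BinomialCount

variable {ι α : Type*} [Fintype ι] {A : Set α} [DecidablePred (· ∈ A)]

lemma setOf_filter_mem_eq_pi [DecidableEq ι] (T : Finset ι) :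
    {X : ι → α | ({i | X i ∈ A} : Finset ι) = T} =
      Set.univ.pi fun i => if i ∈ T then A else Aᶜ := by
  ext X
  simp only [Set.mem_univ_pi, Finset.ext_iff, mem_filter_univ]
  refine forall_congr' fun i => ?_
  split_ifs with hi <;> simp [hi]

variable [MeasurableSpace α]

lemma measurable_card_filter_mem (hA : MeasurableSet A) :
    Measurable fun X : ι → α => #{i | X i ∈ A} := by
  simp_rw [card_filter]
  exact Finset.measurable_sum _ fun i _ =>
    Measurable.ite (hA.preimage (measurable_pi_apply i)) measurable_const measurable_const

variable (μ : Measure α) [IsProbabilityMeasure μ]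

lemma measureReal_pi_setOf_filter_mem_eq [DecidableEq ι] (hA : MeasurableSet A) (T : Finset ι) :
    (Measure.pi fun _ : ι => μ).real {X | ({i | X i ∈ A} : Finset ι) = T} =
      μ.real A ^ #T * (1 - μ.real A) ^ (Fintype.card ι - #T) := by
  rw [setOf_filter_mem_eq_pi, measureReal_def, Measure.pi_pi, ENNReal.toReal_prod]
  simp only [apply_ite, prod_ite, prod_const, ← measureReal_def, probReal_compl_eq_one_sub hA]
  rw [filter_mem_eq_inter, univ_inter, filter_not, filter_mem_eq_inter, univ_inter,
    card_sdiff_of_subset (subset_univ T), card_univ]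

lemma measureReal_pi_setOf_card_filter_mem_eq (hA : MeasurableSet A) (j : ℕ) :
    (Measure.pi fun _ : ι => μ).real {X | #{i | X i ∈ A} = j} =
      (Fintype.card ι).choose j * μ.real A ^ j * (1 - μ.real A) ^ (Fintype.card ι - j) := by
  classical
  have hunion : {X : ι → α | #{i | X i ∈ A} = j} =
      ⋃ T ∈ powersetCard j univ, {X | ({i | X i ∈ A} : Finset ι) = T} := by
    ext X
    simp
  rw [hunion, measureReal_biUnion_finset]
  · rw [sum_congr rfl fun T hT => by
      rw [measureReal_pi_setOf_filter_mem_eq μ hA, mem_powersetCard_univ.1 hT]]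
    rw [sum_const, card_powersetCard, card_univ, nsmul_eq_mul, mul_assoc]
  · exact fun T _ T' _ hTT' => Set.disjoint_left.2 fun X hX hX' => hTT' (hX.symm.trans hX')
  · intro T _
    rw [setOf_filter_mem_eq_pi]
    exact MeasurableSet.univ_pi fun i => by split_ifs <;> simp [hA]

lemma measureReal_pi_setOf_le_card_filter_mem (hA : MeasurableSet A) (k : ℕ) :
    (Measure.pi fun _ : ι => μ).real {X | k ≤ #{i | X i ∈ A}} =
      binomialTail (Fintype.card ι) k (μ.real A) := by
  have hunion : {X : ι → α | k ≤ #{i | X i ∈ A}} =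
      ⋃ j ∈ Icc k (Fintype.card ι), {X | #{i | X i ∈ A} = j} := by
    ext X
    simpa using fun _ => card_le_univ _
  rw [hunion, measureReal_biUnion_finset]
  · exact sum_congr rfl fun j _ => measureReal_pi_setOf_card_filter_mem_eq μ hA j
  · exact fun j _ j' _ hjj' => Set.disjoint_left.2 fun X hX hX' => hjj' (hX.symm.trans hX')
  · exact fun j _ => measurable_card_filter_mem hA (measurableSet_singleton j)

end BinomialCount

lemma binomialTail_mono {n k : ℕ} {a b : ℝ} (ha : 0 ≤ a) (hab : a ≤ b) (hb : b ≤ 1) :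
    binomialTail n k a ≤ binomialTail n k b := by
  let U : Measure ℝ := volume.restrict (Set.Icc 0 1)
  have : IsProbabilityMeasure U := ⟨by simp [U]⟩
  have hU : ∀ x ∈ Set.Icc (0 : ℝ) 1, U.real (Set.Iio x) = x := fun x hx => by
    have hIco : Set.Iio x ∩ Set.Icc 0 1 = Set.Ico 0 x := Set.ext fun y => by
      simp only [Set.mem_inter_iff, Set.mem_Iio, Set.mem_Icc, Set.mem_Ico]
      exact ⟨fun h => ⟨h.2.1, h.1⟩, fun h => ⟨h.2, h.1, by linarith [hx.2]⟩⟩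
    simp [U, measureReal_def, Measure.restrict_apply measurableSet_Iio, hIco, hx.1]
  rw [← hU a ⟨ha, hab.trans hb⟩, ← hU b ⟨ha.trans hab, hb⟩, ← Fintype.card_fin n,
    ← measureReal_pi_setOf_le_card_filter_mem U measurableSet_Iio,
    ← measureReal_pi_setOf_le_card_filter_mem U measurableSet_Iio]
  exact measureReal_mono fun X (hX : k ≤ _) =>
    hX.trans (card_le_card (monotone_filter_right _ fun i _ (hi : X i < a) => hi.trans_le hab))

theorem orderStat_quantile_upper_bound_general
    (S : ℕ) (P : Measure ℝ) [IsProbabilityMeasure P]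
    (p δ : ℝ) (hp : p ∈ Set.Ioo (0 : ℝ) 1)
    (s : ℕ) (hsS : s ≤ S)
    (hbinom : ∑ j ∈ Finset.Icc s S,
        (S.choose j : ℝ) * (1 - p) ^ j * p ^ (S - j) ≤ δ) :
    ENNReal.ofReal (1 - δ) ≤
      (Measure.pi fun _ : Fin S => P)
        {X : Fin S → ℝ | ENNReal.ofReal (1 - p) ≤ P {x : ℝ | x ≤ orderStat X s}} := by
  obtain ⟨t, hIio, hIic⟩ :=
    exists_measureReal_Iio_le_le_measureReal_Iic P (sub_pos.2 hp.2) (sub_lt_self 1 hp.1)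
  set B := {X : Fin S → ℝ | s ≤ #{i | X i ∈ Set.Iio t}}
  have hBmeas : MeasurableSet B := measurable_card_filter_mem measurableSet_Iio measurableSet_Ici
  have hB : (Measure.pi fun _ : Fin S => P).real B ≤ δ := calc
    _ = binomialTail S s (P.real (Set.Iio t)) := by
      rw [measureReal_pi_setOf_le_card_filter_mem P measurableSet_Iio, Fintype.card_fin]
    _ ≤ binomialTail S s (1 - p) :=
      binomialTail_mono measureReal_nonneg hIio (by linarith [hp.1])
    _ ≤ δ := by simpa only [binomialTail, sub_sub_cancel] using hbinom
  have hgood : Bᶜ ⊆ {X | ENNReal.ofReal (1 - p) ≤ P {x : ℝ | x ≤ orderStat X s}} := by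
    intro X hX
    have ht : t ≤ orderStat X s := le_of_not_gt fun hlt =>
      hX (by simpa [B] using le_card_filter_lt_of_orderStat_lt X hsS hlt)
    exact (ENNReal.ofReal_le_of_le_toReal hIic).trans (measure_mono (Set.Iic_subset_Iic.2 ht))
  rw [ENNReal.ofReal_le_iff_le_toReal (measure_ne_top _ _), ← measureReal_def]
  calc 1 - δ ≤ 1 - (Measure.pi fun _ : Fin S => P).real B := by linarith
    _ = (Measure.pi fun _ : Fin S => P).real Bᶜ := (probReal_compl_eq_one_sub hBmeas).symm
    _ ≤ _ := measureReal_mono hgood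

/-- **One-sided order-statistic quantile guarantee.**
Let `X_1,…,X_S` be i.i.d. with law `P`, `p ∈ (0,1)`, and suppose `s ∈ {1,…,S}`
and `δ ∈ (0,1)` satisfy `∑_{j=s}^{S} C(S,j) (1-p)^j p^{S-j} ≤ δ`.  Then with
probability at least `1 - δ` over the sample (w.r.t. the product measure `P^⊗S`),
the `s`-th order statistic upper-bounds the `(1-p)`-quantile:
`P({x : x ≤ X^{(s)}}) ≥ 1 - p`. -/
theorem orderStat_quantile_upper_bound
    (S : ℕ) (hS : 0 < S) (P : Measure ℝ) [IsProbabilityMeasure P]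
    (p δ : ℝ) (hp : p ∈ Set.Ioo (0 : ℝ) 1) (hδ : δ ∈ Set.Ioo (0 : ℝ) 1)
    (s : ℕ) (hs1 : 1 ≤ s) (hsS : s ≤ S)
    (hbinom : ∑ j ∈ Finset.Icc s S,
        (S.choose j : ℝ) * (1 - p) ^ j * p ^ (S - j) ≤ δ) :
    ENNReal.ofReal (1 - δ) ≤
      (Measure.pi fun _ : Fin S => P)
        {X : Fin S → ℝ | ENNReal.ofReal (1 - p) ≤ P {x : ℝ | x ≤ orderStat X s}} :=
  orderStat_quantile_upper_bound_general S P p δ hp s hsS hbinom
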